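/- For any w ∈ W̃, one has T(w₀^Σ w) = T(w) ⊔ T_Σ (a disjoint union) and D(w₀^Σ w) = D(w) ⊔ Σ (a disjoint union). -/

import Mathlib

/-!
Relative Coxeter groups: common definitions.

`(W, S)` is a Coxeter system (Mathlib's `CoxeterSystem M W`), `ℓ = cs.length`.
For `w : W`, `invSet cs w` is the set `T(w)` of left inversions of `w`, and
`descSet cs w = T(w) ∩ S` is `D(w)`.  For a subset `Sg ⊆ S` (playing the role of `Σ`),
`par Sg` is the standard parabolic subgroup `W_Σ`, `parRefl Sg` its set of
reflections `T_Σ`, `minRight cs Sg = W^Σ`, `minLeft cs Sg = ^ΣW`,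
`relN cs Sg Sg' = N(Σ, Σ')`, `IsLongest cs Sg w` says `w` is a longest element of `W_Σ`,
`longest cs Sg` is the longest element `w₀^Σ`, `relW cs Sg = W̃`,
`complSet cs Sg = Σ^∁`, `tilde cs Sg s = s̃ = w₀^{Σ∪{s}} w₀^Σ`, `relS cs Sg = S̃`,
`relLength cs Sg = ℓ̃ : W → ℕ∞`, and `GoodSubset cs Sg` records the standing
hypotheses (1) and (2) on `Σ`.
-/

namespace RelativeCoxeter

variable {B W : Type*} [Group W] {M : CoxeterMatrix B}

/-- The set `S` of simple reflections of the Coxeter system. -/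
def simpleSet (cs : CoxeterSystem M W) : Set W := Set.range cs.simple

/-- `T(w)`: the set of left inversions of `w`, i.e. reflections `t` with `ℓ(tw) < ℓ(w)`. -/
def invSet (cs : CoxeterSystem M W) (w : W) : Set W :=
  {t | cs.IsReflection t ∧ cs.length (t * w) < cs.length w}

/-- `D(w) = T(w) ∩ S`. -/
def descSet (cs : CoxeterSystem M W) (w : W) : Set W :=
  invSet cs w ∩ simpleSet cs

/-- The standard parabolic subgroup `W_Σ` generated by `Σ`. -/
def par (Sg : Set W) : Subgroup W := Subgroup.closure Sg

/-- `T_Σ`: the set of reflections of the Coxeter system `(W_Σ, Σ)`. -/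
def parRefl (Sg : Set W) : Set W :=
  {t | ∃ u ∈ par Sg, ∃ s ∈ Sg, t = u * s * u⁻¹}

/-- `W^Σ = {w : T(w⁻¹) ∩ T_Σ = ∅}`, minimal-length representatives of `W/W_Σ`. -/
def minRight (cs : CoxeterSystem M W) (Sg : Set W) : Set W :=
  {w | invSet cs w⁻¹ ∩ parRefl Sg = ∅}

/-- `^ΣW = {w : T(w) ∩ T_Σ = ∅}`, minimal-length representatives of `W_Σ\W`. -/
def minLeft (cs : CoxeterSystem M W) (Sg : Set W) : Set W :=
  {w | invSet cs w ∩ parRefl Sg = ∅}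

/-- `N(Σ, Σ') = {y ∈ W^Σ ∩ ^{Σ'}W : y W_Σ y⁻¹ = W_{Σ'}}`. -/
def relN (cs : CoxeterSystem M W) (Sg Sg' : Set W) : Set W :=
  {y | y ∈ minRight cs Sg ∧ y ∈ minLeft cs Sg' ∧
    (fun u => y * u * y⁻¹) '' (par Sg : Set W) = (par Sg' : Set W)}

/-- `w` is a longest element of `W_Σ`. -/
def IsLongest (cs : CoxeterSystem M W) (Sg : Set W) (w : W) : Prop :=
  w ∈ par Sg ∧ ∀ u ∈ par Sg, cs.length u ≤ cs.length w

/-- The longest element `w₀^Σ` of `W_Σ` (defined when it exists; junk value `1` otherwise). -/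
noncomputable def longest (cs : CoxeterSystem M W) (Sg : Set W) : W :=
  letI := Classical.propDecidable (∃ w, IsLongest cs Sg w)
  if h : ∃ w, IsLongest cs Sg w then h.choose else 1

/-- `W̃ = {w : w W_Σ w⁻¹ = W_Σ and T(w) ∩ T_Σ = ∅}`. -/
def relW (cs : CoxeterSystem M W) (Sg : Set W) : Set W :=
  {w | (fun u => w * u * w⁻¹) '' (par Sg : Set W) = (par Sg : Set W) ∧
    invSet cs w ∩ parRefl Sg = ∅}

/-- `Σ^∁ = {s ∈ S ∖ Σ : W_{Σ∪{s}} is finite}`. -/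
def complSet (cs : CoxeterSystem M W) (Sg : Set W) : Set W :=
  {s ∈ simpleSet cs \ Sg | ((par (Sg ∪ {s}) : Set W)).Finite}

/-- `s̃ = w₀^{Σ∪{s}} w₀^Σ`. -/
noncomputable def tilde (cs : CoxeterSystem M W) (Sg : Set W) (s : W) : W :=
  longest cs (Sg ∪ {s}) * longest cs Sg

/-- `S̃ = {s̃ : s ∈ Σ^∁}`. -/
noncomputable def relS (cs : CoxeterSystem M W) (Sg : Set W) : Set W :=
  {w | ∃ s ∈ complSet cs Sg, w = tilde cs Sg s}

/-- `ℓ̃(w) ∈ ℕ ∪ {∞}`: the minimal `q` such that `w = w₁ ⋯ w_q` with all `w_i ∈ S̃`. -/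
noncomputable def relLength (cs : CoxeterSystem M W) (Sg : Set W) (w : W) : ℕ∞ :=
  sInf {q : ℕ∞ | ∃ l : List W, (∀ x ∈ l, x ∈ relS cs Sg) ∧ l.prod = w ∧
    (l.length : ℕ∞) = q}

/-- The standing hypotheses on `Σ`: `Σ ⊆ S`, `W_Σ` is finite, and for every `Σ'` with
`Σ ⊆ Σ' ⊆ S` and `W_{Σ'}` finite, the longest element `w₀^{Σ'}` normalises `W_Σ`. -/
def GoodSubset (cs : CoxeterSystem M W) (Sg : Set W) : Prop :=
  Sg ⊆ simpleSet cs ∧ ((par Sg : Set W)).Finite ∧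
  ∀ Sg' : Set W, Sg ⊆ Sg' → Sg' ⊆ simpleSet cs → ((par Sg' : Set W)).Finite →
    ∀ w0 : W, IsLongest cs Sg' w0 →
      (fun u => w0 * u * w0⁻¹) '' (par Sg : Set W) = (par Sg : Set W)

variable (cs : CoxeterSystem M W)

end RelativeCoxeter

/-!
Following Björner–Brenti, the reflection cocycle `η : W → (W → ℤˣ)`, defined by
`η(s) = -1` exactly at `s` and `η(uv)(t) = η(u)(t) · η(v)(u⁻¹tu)`, takes the value `-1` exactly
on `T(w)`. Hence `t ∈ T(uv)` iff exactly one of `t ∈ T(u)` and `u⁻¹tu ∈ T(v)` holds.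

For `w ∈ W̃` write `w₀ w = w v` with `v = w⁻¹ w₀ w ∈ W_Σ`. A reflection of `T_Σ = T(w₀)` lies in
`T(w₀ w)`, because its `w₀`-conjugate stays in `T_Σ`, which is disjoint from `T(w)`. A reflection
outside `T_Σ` lies in `T(w v)` iff it lies in `T(w)`, because its `w`-conjugate stays outside
`T_Σ ⊇ T(v)`. The descent sets follow by intersecting with `S`, since `T_Σ ∩ S = Σ`.
-/

theorem Finset.prod_range_two_mul {M : Type*} [CommMonoid M] (f : ℕ → M) (m : ℕ) :
    ∏ r ∈ range (2 * m), f r = ∏ k ∈ range m, f (2 * k) * f (2 * k + 1) := by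
  induction m with
  | zero => simp
  | succ m ih => rw [mul_add_one, prod_range_succ, prod_range_succ, ih, prod_range_succ, mul_assoc]

namespace SemidirectProduct
variable {N G : Type*} [CommGroup N] [Group G] {φ : G →* MulAut N}

theorem mk_pow (n : N) (g : G) (m : ℕ) :
    (⟨n, g⟩ : N ⋊[φ] G) ^ m = ⟨∏ k ∈ Finset.range m, φ (g ^ k) n, g ^ m⟩ := by
  induction m with
  | zero => ext <;> simp
  | succ m ih => rw [pow_succ, ih, Finset.prod_range_succ, pow_succ]; rfl

end SemidirectProduct

namespace CoxeterSystem

open scoped Classical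

variable {B W : Type*} [Group W] {M : CoxeterMatrix B} (cs : CoxeterSystem M W)

local prefix:100 "π " => cs.wordProd
local prefix:100 "lis " => cs.leftInvSeq

def conjSignAut : W →* MulAut (W → ℤˣ) :=
  mulAutArrow.comp ConjAct.toConjAct.toMonoidHom

theorem conjSignAut_apply (u : W) (f : W → ℤˣ) (t : W) :
    conjSignAut u f t = f (u⁻¹ * t * u) := by
  show f ((ConjAct.toConjAct u)⁻¹ • t) = _
  rw [ConjAct.smul_def]; simp

theorem conjSignAut_mulSingle (u t : W) (ε : ℤˣ) :
    conjSignAut u (Pi.mulSingle t ε) = Pi.mulSingle (u * t * u⁻¹) ε := by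
  funext x
  simp only [conjSignAut_apply, Pi.mulSingle_apply]
  congr 1
  exact propext ⟨fun h => by rw [← h]; group, fun h => by rw [h]; group⟩

noncomputable def signGen (i : B) : (W → ℤˣ) ⋊[conjSignAut] W :=
  ⟨Pi.mulSingle (cs.simple i) (-1), cs.simple i⟩

theorem isLiftable_signGen : M.IsLiftable cs.signGen := by
  intro i j
  set a := cs.simple i
  set x := a * cs.simple j
  have hax : a * x⁻¹ * a⁻¹ = x := by simp [x, a, mul_assoc, inv_simple]
  have hconj (k : ℕ) : x ^ k * a * (x ^ k)⁻¹ = x ^ (2 * k) * a :=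
    calc x ^ k * a * (x ^ k)⁻¹ = x ^ k * (a * x⁻¹ * a⁻¹) ^ k * a := by rw [conj_pow]; group
      _ = x ^ (2 * k) * a := by rw [hax, two_mul, pow_add]
  have hconj' (k : ℕ) : x ^ k * (x * a) * (x ^ k)⁻¹ = x ^ (2 * k + 1) * a := by
    rw [pow_succ', mul_assoc x, ← hconj]; group
  have hgen : cs.signGen i * cs.signGen j =
      ⟨Pi.mulSingle a (-1) * Pi.mulSingle (x * a) (-1), x⟩ := by
    ext1
    · simp only [signGen, SemidirectProduct.mul_left, conjSignAut_mulSingle]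
      congr 3; simp [a, inv_simple]
    · rfl
  -- The sign part of `(signGen i * signGen j) ^ m` is the product of the
  -- `Pi.mulSingle (x ^ r * a) (-1)` over `r < 2m`; as `x ^ m = 1`, every factor occurs twice.
  rw [hgen, SemidirectProduct.mk_pow]
  ext1
  · have hperiod (r : ℕ) : x ^ (M i j + r) * a = x ^ r * a := by
      rw [pow_add, cs.simple_mul_simple_pow, one_mul]
    simp only [map_mul, conjSignAut_mulSingle, hconj, hconj']
    rw [← Finset.prod_range_two_mul (fun r => (Pi.mulSingle (x ^ r * a) (-1) : W → ℤˣ)), two_mul,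
      Finset.prod_range_add]
    simp only [hperiod]
    funext t
    exact Int.units_mul_self _
  · exact cs.simple_mul_simple_pow i j

noncomputable def signHom : W →* (W → ℤˣ) ⋊[conjSignAut] W :=
  cs.lift ⟨cs.signGen, cs.isLiftable_signGen⟩

theorem right_signHom (w : W) : (cs.signHom w).right = w := by
  have : SemidirectProduct.rightHom.comp cs.signHom = MonoidHom.id W :=
    cs.ext_simple fun i => by simp [signHom, signGen]
  exact DFunLike.congr_fun this w

noncomputable def reflSign (w : W) : W → ℤˣ := (cs.signHom w).left

@[simp] theorem reflSign_one : cs.reflSign 1 = 1 := by simp [reflSign]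

theorem reflSign_mul (u v : W) :
    cs.reflSign (u * v) = cs.reflSign u * conjSignAut u (cs.reflSign v) := by
  simp only [reflSign, map_mul, SemidirectProduct.mul_left, right_signHom]

theorem reflSign_simple (i : B) :
    cs.reflSign (cs.simple i) = Pi.mulSingle (cs.simple i) (-1) := by
  simp [reflSign, signHom, signGen]

theorem reflSign_wordProd (ω : List B) :
    cs.reflSign (π ω) = ((lis ω).map fun t => Pi.mulSingle t (-1)).prod := by
  induction ω with
  | nil => simp [reflSign]
  | cons i ω ih =>
    simp [leftInvSeq, wordProd_cons, reflSign_mul, reflSign_simple, ih, map_list_prod,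
      conjSignAut_mulSingle, Function.comp_def]

theorem mem_leftInvSeq_of_reflSign {ω : List B} {t : W} (h : cs.reflSign (π ω) t ≠ 1) :
    t ∈ lis ω := by
  contrapose! h
  rw [reflSign_wordProd, Pi.list_prod_apply]
  refine List.prod_eq_one fun ε hε => ?_
  obtain ⟨t', ht', rfl⟩ := List.mem_map.1 (List.map_map ▸ hε)
  exact Pi.mulSingle_eq_of_ne (ne_of_mem_of_not_mem ht' h).symm _

theorem reflSign_inv_apply (u t : W) : cs.reflSign u⁻¹ t = cs.reflSign u (u * t * u⁻¹) := by
  have h := congrFun (cs.reflSign_mul u u⁻¹) (u * t * u⁻¹)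
  rw [mul_inv_cancel, reflSign_one, Pi.mul_apply, conjSignAut_apply,
    show u⁻¹ * (u * t * u⁻¹) * u = t by group] at h
  rw [eq_inv_of_mul_eq_one_right h.symm, Int.units_inv_eq_self]

theorem reflSign_self {t : W} (ht : cs.IsReflection t) : cs.reflSign t t = -1 := by
  obtain ⟨u, i, rfl⟩ := ht
  simp only [reflSign_mul, Pi.mul_apply, conjSignAut_apply, reflSign_simple, reflSign_inv_apply]
  rw [show u⁻¹ * (u * cs.simple i * u⁻¹) * u = cs.simple i by group,
    show u * ((u * cs.simple i)⁻¹ * (u * cs.simple i * u⁻¹) * (u * cs.simple i)) * u⁻¹ =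
      u * cs.simple i * u⁻¹ by group,
    Pi.mulSingle_eq_same, mul_right_comm, Int.units_mul_self, one_mul]

theorem isLeftInversion_of_reflSign {w t : W} (h : cs.reflSign w t = -1) :
    cs.IsLeftInversion w t := by
  obtain ⟨ω, hω, rfl⟩ := cs.exists_isReduced w
  exact cs.isLeftInversion_of_mem_leftInvSeq hω
    (cs.mem_leftInvSeq_of_reflSign (by rw [h]; decide))

theorem isLeftInversion_iff_reflSign {w t : W} :
    cs.IsLeftInversion w t ↔ cs.reflSign w t = -1 := by
  refine ⟨fun h => ?_, cs.isLeftInversion_of_reflSign⟩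
  by_contra hne
  have htw : cs.reflSign (t * w) t = -1 := by
    rw [reflSign_mul, Pi.mul_apply, conjSignAut_apply, inv_mul_cancel, one_mul,
      cs.reflSign_self h.1, (Int.units_eq_one_or _).resolve_right hne, mul_one]
  have := (cs.isLeftInversion_of_reflSign htw).2
  rw [← mul_assoc, h.1.mul_self, one_mul] at this
  exact lt_asymm this h.2

theorem mem_leftInvSeq_of_isLeftInversion {ω : List B} {t : W}
    (h : cs.IsLeftInversion (π ω) t) : t ∈ lis ω :=
  cs.mem_leftInvSeq_of_reflSign (by rw [cs.isLeftInversion_iff_reflSign.1 h]; decide)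

theorem isLeftInversion_mul_iff {u v t : W} :
    cs.IsLeftInversion (u * v) t ↔
      Xor (cs.IsLeftInversion u t) (cs.IsLeftInversion v (u⁻¹ * t * u)) := by
  simp only [isLeftInversion_iff_reflSign, reflSign_mul, Pi.mul_apply, conjSignAut_apply]
  rcases Int.units_eq_one_or (cs.reflSign u t) with h | h <;>
    rcases Int.units_eq_one_or (cs.reflSign v (u⁻¹ * t * u)) with h' | h' <;> simp [h, h']

theorem exists_reduced_sublist (ω : List B) :
    ∃ ω' : List B, ω'.Sublist ω ∧ cs.IsReduced ω' ∧ π ω' = π ω := by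
  induction ω using List.reverseRecOn with
  | nil => exact ⟨[], List.Sublist.slnil, by simp [IsReduced], rfl⟩
  | append_singleton ω i ih =>
    obtain ⟨ω', hsub, hred, hprod⟩ := ih
    have hprod_i : π (ω ++ [i]) = π ω' * cs.simple i := by
      rw [wordProd_append, wordProd_singleton, hprod]
    rcases cs.length_mul_simple (π ω') i with hup | hdown
    · refine ⟨ω' ++ [i], hsub.append (List.Sublist.refl _), ?_,
        by rw [hprod_i, wordProd_append, wordProd_singleton]⟩
      rw [IsReduced, wordProd_append, wordProd_singleton, hup, hred.eq, List.length_append,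
        List.length_singleton]
    · -- strong exchange deletes a letter of `ω'` instead of appending `i`
      have ht : cs.IsLeftInversion (π ω') (π ω' * cs.simple i * (π ω')⁻¹) :=
        ⟨⟨_, _, rfl⟩, by rw [inv_mul_cancel_right]; omega⟩
      obtain ⟨j, hj, hjt⟩ := List.mem_iff_getElem.1 (cs.mem_leftInvSeq_of_isLeftInversion ht)
      have herase : π (ω'.eraseIdx j) = π ω' * cs.simple i := by
        rw [← getD_leftInvSeq_mul_wordProd, List.getD_eq_getElem _ _ hj, hjt,
          inv_mul_cancel_right]
      rw [length_leftInvSeq] at hj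
      refine ⟨ω'.eraseIdx j, ((List.eraseIdx_sublist _ _).trans hsub).trans
        (List.sublist_append_left _ _), ?_, by rw [herase, hprod_i]⟩
      have hlen := List.length_eraseIdx_add_one hj
      have hred_len := hred.eq
      rw [IsReduced, herase]
      omega

end CoxeterSystem

namespace RelativeCoxeter

variable {B W : Type*} [Group W] {M : CoxeterMatrix B} (cs : CoxeterSystem M W)

theorem mem_invSet_mul_iff {u v t : W} :
    t ∈ invSet cs (u * v) ↔ Xor (t ∈ invSet cs u) (u⁻¹ * t * u ∈ invSet cs v) :=
  cs.isLeftInversion_mul_iff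

section Parabolic

variable {Sg : Set W}

theorem subset_parRefl (Sg : Set W) : Sg ⊆ parRefl Sg :=
  fun s hs => ⟨1, one_mem _, s, hs, by group⟩

theorem conj_mem_parRefl {u t : W} (hu : u ∈ par Sg) (ht : t ∈ parRefl Sg) :
    u * t * u⁻¹ ∈ parRefl Sg := by
  obtain ⟨v, hv, s, hs, rfl⟩ := ht
  exact ⟨u * v, mul_mem hu hv, s, hs, by group⟩

theorem wordProd_mem_par {ω : List B} (hω : ∀ i ∈ ω, cs.simple i ∈ Sg) :
    cs.wordProd ω ∈ par Sg :=
  (par Sg).list_prod_mem (by simpa [par] using fun i hi => Subgroup.subset_closure (hω i hi))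

theorem exists_wordProd_eq_of_mem_par (hS : Sg ⊆ simpleSet cs) {u : W} (hu : u ∈ par Sg) :
    ∃ ω : List B, (∀ i ∈ ω, cs.simple i ∈ Sg) ∧ cs.wordProd ω = u := by
  induction hu using Subgroup.closure_induction with
  | mem x hx =>
    obtain ⟨i, rfl⟩ := hS hx
    exact ⟨[i], by simpa using hx, cs.wordProd_singleton i⟩
  | one => exact ⟨[], by simp, cs.wordProd_nil⟩
  | mul x y _ _ ihx ihy =>
    obtain ⟨ω₁, h₁, rfl⟩ := ihx
    obtain ⟨ω₂, h₂, rfl⟩ := ihy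
    exact ⟨ω₁ ++ ω₂, by simpa [or_imp, forall_and] using ⟨h₁, h₂⟩, cs.wordProd_append ω₁ ω₂⟩
  | inv x _ ihx =>
    obtain ⟨ω, h, rfl⟩ := ihx
    exact ⟨ω.reverse, by simpa using h, cs.wordProd_reverse ω⟩

theorem invSet_subset_parRefl (hS : Sg ⊆ simpleSet cs) {u : W} (hu : u ∈ par Sg) :
    invSet cs u ⊆ parRefl Sg := by
  obtain ⟨ω, hω, rfl⟩ := exists_wordProd_eq_of_mem_par cs hS hu
  intro t ht
  obtain ⟨j, hj, rfl⟩ := List.mem_iff_getElem.1 (cs.mem_leftInvSeq_of_isLeftInversion ht)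
  rw [cs.length_leftInvSeq] at hj
  rw [cs.getElem_leftInvSeq ω j hj]
  exact ⟨_, wordProd_mem_par cs fun i hi => hω i (List.mem_of_mem_take hi), _,
    hω _ (List.getElem_mem hj), rfl⟩

theorem mem_parRefl_iff (hS : Sg ⊆ simpleSet cs) {t : W} :
    t ∈ parRefl Sg ↔ cs.IsReflection t ∧ t ∈ par Sg := by
  refine ⟨?_, fun ⟨ht, htS⟩ => invSet_subset_parRefl cs hS htS ⟨ht, ?_⟩⟩
  · rintro ⟨u, hu, s, hs, rfl⟩
    obtain ⟨i, rfl⟩ := hS hs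
    exact ⟨⟨u, i, rfl⟩, mul_mem (mul_mem hu (Subgroup.subset_closure hs)) (inv_mem hu)⟩
  · rw [ht.mul_self, cs.length_one]
    exact ht.odd_length.pos

theorem parRefl_inter_simpleSet (hS : Sg ⊆ simpleSet cs) : parRefl Sg ∩ simpleSet cs = Sg := by
  refine subset_antisymm ?_ fun s hs => ⟨subset_parRefl Sg hs, hS hs⟩
  rintro _ ⟨ht, i, rfl⟩
  obtain ⟨ω, hω, hprod⟩ := exists_wordProd_eq_of_mem_par cs hS ((mem_parRefl_iff cs hS).1 ht).2
  obtain ⟨ω', hsub, hred, hprod'⟩ := cs.exists_reduced_sublist ω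
  obtain ⟨j, rfl⟩ : ∃ j, ω' = [j] :=
    List.length_eq_one_iff.1 (by rw [← hred.eq, hprod', hprod, cs.length_simple])
  rw [← hprod, ← hprod', cs.wordProd_singleton]
  exact hω j (hsub.subset (List.mem_singleton_self j))

theorem parRefl_subset_invSet_longest (hS : Sg ⊆ simpleSet cs) {w0 : W}
    (hw0 : IsLongest cs Sg w0) : parRefl Sg ⊆ invSet cs w0 := by
  intro t ht
  obtain ⟨htr, htS⟩ := (mem_parRefl_iff cs hS).1 ht
  exact ⟨htr, lt_of_le_of_ne (hw0.2 _ (mul_mem htS hw0.1)) (htr.length_mul_right_ne w0)⟩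

theorem parRefl_subset_invSet_longest_mul (hS : Sg ⊆ simpleSet cs) {w0 w : W}
    (hw0 : IsLongest cs Sg w0) (hw : w ∈ minLeft cs Sg) : parRefl Sg ⊆ invSet cs (w0 * w) := by
  intro t ht
  refine (mem_invSet_mul_iff cs).2
    (Or.inl ⟨parRefl_subset_invSet_longest cs hS hw0 ht, fun h => ?_⟩)
  have hconj := conj_mem_parRefl (inv_mem hw0.1) ht
  rw [inv_inv] at hconj
  exact Set.eq_empty_iff_forall_notMem.1 hw _ ⟨h, hconj⟩

theorem mem_invSet_mul_iff_of_notMem_parRefl (hS : Sg ⊆ simpleSet cs) {w v t : W}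
    (hw : ∀ u ∈ par Sg, w * u * w⁻¹ ∈ par Sg) (hv : v ∈ par Sg) (ht : t ∉ parRefl Sg) :
    t ∈ invSet cs (w * v) ↔ t ∈ invSet cs w := by
  have hconj : w⁻¹ * t * w ∉ invSet cs v := fun h => ht <| by
    obtain ⟨hr, hpar⟩ := (mem_parRefl_iff cs hS).1 (invSet_subset_parRefl cs hS hv h)
    have ht' : w * (w⁻¹ * t * w) * w⁻¹ = t := by group
    exact (mem_parRefl_iff cs hS).2 ⟨ht' ▸ hr.conj w, ht' ▸ hw _ hpar⟩
  rw [mem_invSet_mul_iff]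
  simp [Xor, hconj]

theorem invSet_longest_mul_eq (hS : Sg ⊆ simpleSet cs) {w0 w : W} (hw0 : IsLongest cs Sg w0)
    (hw : w ∈ relW cs Sg) : invSet cs (w0 * w) = invSet cs w ∪ parRefl Sg := by
  obtain ⟨v, hv, rfl⟩ : w0 ∈ (fun u => w * u * w⁻¹) '' (par Sg : Set W) := by
    rw [hw.1]; exact hw0.1
  have hnorm : ∀ u ∈ par Sg, w * u * w⁻¹ ∈ par Sg := fun u hu => hw.1.subset ⟨u, hu, rfl⟩
  ext t
  by_cases ht : t ∈ parRefl Sg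
  · simpa [ht] using parRefl_subset_invSet_longest_mul cs hS hw0 hw.2 ht
  · rw [show w * v * w⁻¹ * w = w * v by group,
      mem_invSet_mul_iff_of_notMem_parRefl cs hS hnorm hv ht]
    simp [ht]

end Parabolic

/-- for `w ∈ W̃`, `T(w₀^Σ w) = T(w) ⊔ T_Σ` and `D(w₀^Σ w) = D(w) ⊔ Σ`. -/
theorem invSet_longest_mul (Sg : Set W) (hSg : GoodSubset cs Sg)
    (w0 : W) (hw0 : IsLongest cs Sg w0) (w : W) (hw : w ∈ relW cs Sg) :
    invSet cs (w0 * w) = invSet cs w ∪ parRefl Sg ∧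
    Disjoint (invSet cs w) (parRefl Sg) ∧
    descSet cs (w0 * w) = descSet cs w ∪ Sg ∧
    Disjoint (descSet cs w) Sg := by
  have hS : Sg ⊆ simpleSet cs := hSg.1
  have hinv := invSet_longest_mul_eq cs hS hw0 hw
  have hdisj : Disjoint (invSet cs w) (parRefl Sg) := Set.disjoint_iff_inter_eq_empty.2 hw.2
  refine ⟨hinv, hdisj, ?_, hdisj.mono Set.inter_subset_left (subset_parRefl Sg)⟩
  rw [descSet, hinv, Set.union_inter_distrib_right, parRefl_inter_simpleSet cs hS, descSet]

end RelativeCoxeter
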